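/- Let G, H be strongly connected finite graphs and Φ: G → H a right-resolver. Let I, J be states of H and u₁, u₂ paths in H from I to J such that U₁ = (∂Φ)⁻¹(I)·u₁ and U₂ = (∂Φ)⁻¹(I)·u₂ are minimal images. If the symmetric difference U₁ Δ U₂ has exactly two elements J₁, J₂, then J₁ ∼_Φ J₂. -/

import Mathlib

/-- A finite directed multigraph. -/
structure FinGraph where
  V : Type
  E : Type
  [fintV : Fintype V]
  [fintE : Fintype E]
  [decV : DecidableEq V]
  [decE : DecidableEq E]
  src : E → V
  tgt : E → V

attribute [instance] FinGraph.fintV FinGraph.fintE FinGraph.decV FinGraph.decE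

/-- A graph homomorphism. -/
structure GHom (G H : FinGraph) where
  eMap : G.E → H.E
  vMap : G.V → H.V
  src_eq : ∀ e, H.src (eMap e) = vMap (G.src e)
  tgt_eq : ∀ e, H.tgt (eMap e) = vMap (G.tgt e)

def GHom.comp {G K H : FinGraph} (Δ : GHom K H) (Ψ : GHom G K) : GHom G H where
  eMap := Δ.eMap ∘ Ψ.eMap
  vMap := Δ.vMap ∘ Ψ.vMap
  src_eq := fun e => by
    simp only [Function.comp_apply, Δ.src_eq, Ψ.src_eq]
  tgt_eq := fun e => by
    simp only [Function.comp_apply, Δ.tgt_eq, Ψ.tgt_eq]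

/-- The restriction of a homomorphism to the outgoing edges of a state. -/
def outMap {G H : FinGraph} (Φ : GHom G H) (I : G.V) :
    {e : G.E // G.src e = I} → {f : H.E // H.src f = Φ.vMap I} :=
  fun e => ⟨Φ.eMap e.1, (Φ.src_eq e.1).trans (congrArg Φ.vMap e.2)⟩

/-- A right-resolver: a surjective homomorphism restricting to a bijection
on the outgoing edges of each state. -/
def IsRR {G H : FinGraph} (Φ : GHom G H) : Prop :=
  Function.Surjective Φ.vMap ∧ ∀ I : G.V, Function.Bijective (outMap Φ I)

/-- `IsPathFrom H I u`: the edge list `u` is a path in `H` starting at `I`. -/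
def IsPathFrom (H : FinGraph) : H.V → List H.E → Prop
  | _, [] => True
  | I, e :: u => H.src e = I ∧ IsPathFrom H (H.tgt e) u

/-- The terminal state of a path starting at `I`. -/
def pathEnd (H : FinGraph) (I : H.V) (u : List H.E) : H.V :=
  u.foldl (fun _ e => H.tgt e) I

/-- One-step transition: `I · a` is the target of the unique edge at `I`
lifting `a` (when `Φ` is right-resolving and `a` starts at the image of `I`). -/
noncomputable def step {G H : FinGraph} (Φ : GHom G H) (I : G.V) (a : H.E) : G.V :=
  if h : ∃ e : G.E, G.src e = I ∧ Φ.eMap e = a then G.tgt h.choose else I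

/-- Transition along a word: `I · u`. -/
noncomputable def transPath {G H : FinGraph} (Φ : GHom G H) (I : G.V) (u : List H.E) : G.V :=
  u.foldl (step Φ) I

/-- The stability relation of a right-resolver. -/
def Stable {G H : FinGraph} (Φ : GHom G H) (I₁ I₂ : G.V) : Prop :=
  Φ.vMap I₁ = Φ.vMap I₂ ∧
  ∀ u : List H.E, IsPathFrom H (Φ.vMap I₁) u →
    ∃ v : List H.E, IsPathFrom H (pathEnd H (Φ.vMap I₁) u) v ∧
      transPath Φ I₁ (u ++ v) = transPath Φ I₂ (u ++ v)

/-- A right-resolver is synchronizing if each fiber of its state map is a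
single stability class. -/
def Synchronizing {G H : FinGraph} (Φ : GHom G H) : Prop :=
  ∀ I₁ I₂ : G.V, Φ.vMap I₁ = Φ.vMap I₂ → Stable Φ I₁ I₂

/-- The fiber of the state map over a state of the codomain. -/
def fiber {G H : FinGraph} (Φ : GHom G H) (I : H.V) : Set G.V := {J | Φ.vMap J = I}

/-- The image `U · u` of a set of states under transition along a word. -/
noncomputable def setTrans {G H : FinGraph} (Φ : GHom G H) (U : Set G.V)
    (u : List H.E) : Set G.V :=
  (fun J => transPath Φ J u) '' U

/-- A minimal image of a right-resolver. -/
def IsMinImage {G H : FinGraph} (Φ : GHom G H) (U : Set G.V) : Prop :=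
  ∃ (I : H.V) (u : List H.E), IsPathFrom H I u ∧ U = setTrans Φ (fiber Φ I) u ∧
    ∀ v : List H.E, IsPathFrom H (pathEnd H I u) v →
      (setTrans Φ U v).ncard = U.ncard

/-- Strong connectedness: a directed path between every ordered pair of states. -/
def StronglyConnected (G : FinGraph) : Prop :=
  ∀ I J : G.V, ∃ u : List G.E, IsPathFrom G I u ∧ pathEnd G I u = J

/-! Since `H` is strongly connected, each of `U₁ = F·u₁`, `U₂ = F·u₂` (with `F` the fiber over `I`)
can be driven back into `F` and then along `u₁` into `U₁`; minimality of both forces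
`|U₁| = |U₂|`. Given any path `u` from `J`, choose `w` from its end to `I` and put
`t = u w u₁`. Then `(U₁ ∪ U₂)·t ⊆ U₁`, while `t` is injective on both `U₁` and `U₂`, so
`U₁·t = (U₁ ∪ U₂)·t = U₂·t`. If `J₁ ∈ U₁ \ U₂`, then `J₁·t = K·t` for some `K ∈ U₂`;
injectivity on `U₁` rules out `K ∈ U₁`, so `K ∈ U₂ \ U₁ ⊆ {J₁, J₂}`, i.e. `K = J₂`. -/

theorem Set.apply_eq_of_image_eq_of_symmDiff_eq_pair {α β : Type*} {f : α → β} {A B : Set α}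
    {x y : α} (hAB : f '' A = f '' B) (hA : A.InjOn f) (hB : B.InjOn f)
    (hxy : symmDiff A B = {x, y}) : f x = f y := by
  have hx : x ∈ symmDiff A B := hxy ▸ Set.mem_insert x {y}
  wlog hxA : x ∈ A ∧ x ∉ B generalizing A B
  · exact this hAB.symm hB hA (symmDiff_comm A B ▸ hxy) (symmDiff_comm A B ▸ hx)
      (hx.resolve_left hxA)
  obtain ⟨z, hzB, hzx⟩ : f x ∈ f '' B := hAB ▸ Set.mem_image_of_mem f hxA.1
  have hzA : z ∉ A := fun hzA => hxA.2 (hA hzA hxA.1 hzx ▸ hzB)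
  have hz : z ∈ ({x, y} : Set α) := hxy ▸ Or.inr ⟨hzB, hzA⟩
  rcases hz with rfl | rfl
  · exact absurd hzB hxA.2
  · exact hzx.symm

section Transitions

variable {G H : FinGraph}

theorem pathEnd_append (I : H.V) (u v : List H.E) :
    pathEnd H I (u ++ v) = pathEnd H (pathEnd H I u) v :=
  List.foldl_append

theorem IsPathFrom.append {I : H.V} {u v : List H.E} (hu : IsPathFrom H I u)
    (hv : IsPathFrom H (pathEnd H I u) v) : IsPathFrom H I (u ++ v) := by
  induction u generalizing I with
  | nil => exact hv
  | cons e u ih => exact ⟨hu.1, ih hu.2 hv⟩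

variable (Φ : GHom G H)

theorem transPath_append (K : G.V) (u v : List H.E) :
    transPath Φ K (u ++ v) = transPath Φ (transPath Φ K u) v :=
  List.foldl_append

theorem setTrans_append (U : Set G.V) (u v : List H.E) :
    setTrans Φ U (u ++ v) = setTrans Φ (setTrans Φ U u) v := by
  simp only [setTrans, Set.image_image, transPath_append]

theorem setTrans_mono {U V : Set G.V} (h : U ⊆ V) (u : List H.E) :
    setTrans Φ U u ⊆ setTrans Φ V u :=
  Set.image_mono h

variable {Φ} (hlift : ∀ K, Function.Surjective (outMap Φ K))
include hlift

theorem vMap_step {K : G.V} {a : H.E} (h : H.src a = Φ.vMap K) :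
    Φ.vMap (step Φ K a) = H.tgt a := by
  obtain ⟨e, he⟩ := hlift K ⟨a, h⟩
  have hex : ∃ e : G.E, G.src e = K ∧ Φ.eMap e = a := ⟨e.1, e.2, congrArg Subtype.val he⟩
  rw [step, dif_pos hex, ← Φ.tgt_eq, hex.choose_spec.2]

theorem vMap_transPath {K : G.V} {u : List H.E} (h : IsPathFrom H (Φ.vMap K) u) :
    Φ.vMap (transPath Φ K u) = pathEnd H (Φ.vMap K) u := by
  induction u generalizing K with
  | nil => rfl
  | cons a u ih =>
    have hs := vMap_step hlift h.1
    show Φ.vMap (transPath Φ (step Φ K a) u) = pathEnd H (H.tgt a) u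
    rw [ih (hs ▸ h.2), hs]

theorem setTrans_subset_fiber {K : H.V} {U : Set G.V} (hU : U ⊆ fiber Φ K) {u : List H.E}
    (hu : IsPathFrom H K u) : setTrans Φ U u ⊆ fiber Φ (pathEnd H K u) := by
  rintro _ ⟨L, hL, rfl⟩
  have hL : Φ.vMap L = K := hU hL
  show Φ.vMap (transPath Φ L u) = _
  rw [vMap_transPath hlift (hL ▸ hu), hL]

theorem setTrans_append_subset {K I : H.V} {U : Set G.V} (hU : U ⊆ fiber Φ K) {w : List H.E}
    (hw : IsPathFrom H K w) (hwI : pathEnd H K w = I) (q : List H.E) :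
    setTrans Φ U (w ++ q) ⊆ setTrans Φ (fiber Φ I) q := by
  rw [setTrans_append]
  exact setTrans_mono Φ (hwI ▸ setTrans_subset_fiber hlift hU hw) q

theorem setTrans_fiber_subset_fiber {I : H.V} {u : List H.E} (hu : IsPathFrom H I u) :
    setTrans Φ (fiber Φ I) u ⊆ fiber Φ (pathEnd H I u) :=
  setTrans_subset_fiber hlift subset_rfl hu

end Transitions

/-- `U` keeps its size along every path from `J`; a minimal image over `J` is exactly an
image `F·u` with this property. -/
def IsMinimalAt {G H : FinGraph} (Φ : GHom G H) (U : Set G.V) (J : H.V) : Prop :=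
  ∀ v : List H.E, IsPathFrom H J v → (setTrans Φ U v).ncard = U.ncard

namespace IsMinimalAt

variable {G H : FinGraph} {Φ : GHom G H} {U : Set G.V} {J : H.V}

theorem injOn (hU : IsMinimalAt Φ U J) {v : List H.E} (hv : IsPathFrom H J v) :
    U.InjOn (fun K => transPath Φ K v) :=
  Set.injOn_of_ncard_image_eq (hU v hv)

theorem ncard_le_ncard_setTrans_fiber (hlift : ∀ K, Function.Surjective (outMap Φ K))
    (hH : StronglyConnected H) (hU : IsMinimalAt Φ U J) (hUJ : U ⊆ fiber Φ J) {I : H.V}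
    {q : List H.E} (hq : IsPathFrom H I q) :
    U.ncard ≤ (setTrans Φ (fiber Φ I) q).ncard := by
  obtain ⟨w, hw, hwI⟩ := hH J I
  rw [← hU (w ++ q) (hw.append (hwI ▸ hq))]
  exact Set.ncard_le_ncard (setTrans_append_subset hlift hUJ hw hwI q)

end IsMinimalAt

theorem exists_setTrans_eq_of_isMinimalAt {G H : FinGraph} {Φ : GHom G H}
    (hlift : ∀ K, Function.Surjective (outMap Φ K)) (hH : StronglyConnected H)
    {I J : H.V} {u₁ u₂ : List H.E} (hu₁ : IsPathFrom H I u₁) (hu₂ : IsPathFrom H I u₂)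
    (he₁ : pathEnd H I u₁ = J) (he₂ : pathEnd H I u₂ = J)
    (hmin₁ : IsMinimalAt Φ (setTrans Φ (fiber Φ I) u₁) J)
    (hmin₂ : IsMinimalAt Φ (setTrans Φ (fiber Φ I) u₂) J)
    {u : List H.E} (hu : IsPathFrom H J u) :
    ∃ v : List H.E, IsPathFrom H (pathEnd H J u) v ∧
      setTrans Φ (setTrans Φ (fiber Φ I) u₁) (u ++ v)
        = setTrans Φ (setTrans Φ (fiber Φ I) u₂) (u ++ v) := by
  set U₁ := setTrans Φ (fiber Φ I) u₁
  set U₂ := setTrans Φ (fiber Φ I) u₂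
  have hU₁ : U₁ ⊆ fiber Φ J := he₁ ▸ setTrans_fiber_subset_fiber hlift hu₁
  have hU₂ : U₂ ⊆ fiber Φ J := he₂ ▸ setTrans_fiber_subset_fiber hlift hu₂
  have hcard : U₁.ncard = U₂.ncard :=
    (hmin₁.ncard_le_ncard_setTrans_fiber hlift hH hU₁ hu₂).antisymm
      (hmin₂.ncard_le_ncard_setTrans_fiber hlift hH hU₂ hu₁)
  obtain ⟨w, hw, hwI⟩ := hH (pathEnd H J u) I
  have hv : IsPathFrom H (pathEnd H J u) (w ++ u₁) := hw.append (hwI ▸ hu₁)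
  refine ⟨w ++ u₁, hv, ?_⟩
  have huw : IsPathFrom H J (u ++ w) := hu.append hw
  have hunion : setTrans Φ (U₁ ∪ U₂) (u ++ (w ++ u₁)) ⊆ U₁ := by
    rw [← List.append_assoc]
    exact setTrans_append_subset hlift (Set.union_subset hU₁ hU₂) huw
      (by rw [pathEnd_append, hwI]) u₁
  have hUnion_le := Set.ncard_le_ncard hunion
  have ht : IsPathFrom H J (u ++ (w ++ u₁)) := hu.append hv
  have h₁ := Set.eq_of_subset_of_ncard_le (setTrans_mono Φ Set.subset_union_left _)
    (hUnion_le.trans (hmin₁ _ ht).ge)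
  have h₂ := Set.eq_of_subset_of_ncard_le (setTrans_mono Φ Set.subset_union_right _)
    (hUnion_le.trans (hcard ▸ (hmin₂ _ ht).ge))
  exact h₁.trans h₂.symm

theorem min_images_symmdiff_pair_stable_general {G H : FinGraph} (Φ : GHom G H)
    (hΦ : IsRR Φ) (hH : StronglyConnected H)
    (I J : H.V) (u₁ u₂ : List H.E)
    (hu₁ : IsPathFrom H I u₁) (hu₂ : IsPathFrom H I u₂)
    (he₁ : pathEnd H I u₁ = J) (he₂ : pathEnd H I u₂ = J)
    (hmin₁ : ∀ v : List H.E, IsPathFrom H J v →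
      (setTrans Φ (setTrans Φ (fiber Φ I) u₁) v).ncard
        = (setTrans Φ (fiber Φ I) u₁).ncard)
    (hmin₂ : ∀ v : List H.E, IsPathFrom H J v →
      (setTrans Φ (setTrans Φ (fiber Φ I) u₂) v).ncard
        = (setTrans Φ (fiber Φ I) u₂).ncard)
    (J₁ J₂ : G.V)
    (hsd : symmDiff (setTrans Φ (fiber Φ I) u₁) (setTrans Φ (fiber Φ I) u₂)
      = {J₁, J₂}) :
    Stable Φ J₁ J₂ := by
  have hlift : ∀ K, Function.Surjective (outMap Φ K) := fun K => (hΦ.2 K).2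
  have hfib : symmDiff (setTrans Φ (fiber Φ I) u₁) (setTrans Φ (fiber Φ I) u₂) ⊆ fiber Φ J :=
    symmDiff_le_sup.trans <| Set.union_subset
      (he₁ ▸ setTrans_fiber_subset_fiber hlift hu₁) (he₂ ▸ setTrans_fiber_subset_fiber hlift hu₂)
  have hJ₁ : Φ.vMap J₁ = J := hfib (hsd ▸ Set.mem_insert J₁ {J₂})
  have hJ₂ : Φ.vMap J₂ = J := hfib (hsd ▸ Set.mem_insert_of_mem J₁ rfl)
  refine ⟨hJ₁.trans hJ₂.symm, fun u hu => ?_⟩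
  rw [hJ₁] at hu ⊢
  obtain ⟨v, hv, hmerge⟩ :=
    exists_setTrans_eq_of_isMinimalAt hlift hH hu₁ hu₂ he₁ he₂ hmin₁ hmin₂ hu
  have ht : IsPathFrom H J (u ++ v) := hu.append hv
  exact ⟨v, hv, Set.apply_eq_of_image_eq_of_symmDiff_eq_pair hmerge
    (IsMinimalAt.injOn hmin₁ ht) (IsMinimalAt.injOn hmin₂ ht) hsd⟩

/-- two minimal images obtained from the same fiber whose
symmetric difference is a pair yield a stable pair. -/
theorem min_images_symmdiff_pair_stable {G H : FinGraph} (Φ : GHom G H)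
    (hΦ : IsRR Φ) (hG : StronglyConnected G) (hH : StronglyConnected H)
    (I J : H.V) (u₁ u₂ : List H.E)
    (hu₁ : IsPathFrom H I u₁) (hu₂ : IsPathFrom H I u₂)
    (he₁ : pathEnd H I u₁ = J) (he₂ : pathEnd H I u₂ = J)
    (hmin₁ : ∀ v : List H.E, IsPathFrom H J v →
      (setTrans Φ (setTrans Φ (fiber Φ I) u₁) v).ncard
        = (setTrans Φ (fiber Φ I) u₁).ncard)
    (hmin₂ : ∀ v : List H.E, IsPathFrom H J v →
      (setTrans Φ (setTrans Φ (fiber Φ I) u₂) v).ncard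
        = (setTrans Φ (fiber Φ I) u₂).ncard)
    (J₁ J₂ : G.V) (hne : J₁ ≠ J₂)
    (hsd : symmDiff (setTrans Φ (fiber Φ I) u₁) (setTrans Φ (fiber Φ I) u₂)
      = {J₁, J₂}) :
    Stable Φ J₁ J₂ :=
  min_images_symmdiff_pair_stable_general Φ hΦ hH I J u₁ u₂ hu₁ hu₂ he₁ he₂ hmin₁ hmin₂ J₁ J₂ hsd
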